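/- In the 3-SAT reduction for superset repairs with data values: given a 3CNF formula φ with n variables and m clauses, let G be the data-graph with a single node v with data value null and no edges. Define R to contain, for each variable i, the path expression α_i = ([x_i⁼] down* [¬x_i≠]) ∪ ([x_i≠] down* [¬x_i⁼]) ∪ ([x_i≠] down* [¬x_i≠]), and for each clause j with literals c₁ʲ, c₂ʲ, c₃ʲ, the path expression β_j = (down* [(c₁ʲ)⁼] down*) ∪ (down* [(c₂ʲ)⁼] down*) ∪ (down* [(c₃ʲ)⁼] down*), where the data values x_i, ¬x_i denote distinct elements of Σ_n. Then φ is satisfiable if and only if G has a superset repair with respect to R. -/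

import Mathlib

/-- A data-graph: a set of nodes, an edge labeling, and a data-value assignment. -/
structure DataGraph (V E Dv : Type) where
  nodes : Set V
  edges : V → V → Set E
  data : V → Dv

mutual
/-- Reg-GXPath path expressions. -/
inductive PExp (E Dv : Type) where
  | eps : PExp E Dv
  | wild : PExp E Dv
  | lab : E → PExp E Dv
  | inv : E → PExp E Dv
  | test : NExp E Dv → PExp E Dv
  | comp : PExp E Dv → PExp E Dv → PExp E Dv
  | union : PExp E Dv → PExp E Dv → PExp E Dv
  | inter : PExp E Dv → PExp E Dv → PExp E Dv
  | star : PExp E Dv → PExp E Dv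
  | compl : PExp E Dv → PExp E Dv
  | iter : PExp E Dv → ℕ → ℕ → PExp E Dv
/-- Reg-GXPath node expressions. -/
inductive NExp (E Dv : Type) where
  | neg : NExp E Dv → NExp E Dv
  | and : NExp E Dv → NExp E Dv → NExp E Dv
  | or : NExp E Dv → NExp E Dv → NExp E Dv
  | diam : PExp E Dv → NExp E Dv
  | eqc : Dv → NExp E Dv
  | neqc : Dv → NExp E Dv
  | cmpEq : PExp E Dv → PExp E Dv → NExp E Dv
  | cmpNeq : PExp E Dv → PExp E Dv → NExp E Dv
end

variable {V E Dv : Type}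

/-- Relational composition of binary relations presented as sets of pairs. -/
def dgComp (R S : Set (V × V)) : Set (V × V) := {p | ∃ y, (p.1, y) ∈ R ∧ (y, p.2) ∈ S}

/-- The identity relation on the nodes of a data-graph. -/
def DataGraph.idRel (G : DataGraph V E Dv) : Set (V × V) := {p | p.1 = p.2 ∧ p.1 ∈ G.nodes}

/-- Iterated relational composition, with `I` as the 0-th power (identity). -/
def dgPow (I R : Set (V × V)) : ℕ → Set (V × V)
  | 0 => I
  | k + 1 => dgComp (dgPow I R k) R

mutual
/-- Semantics of path expressions on a data-graph: a set of pairs of nodes. -/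
def psem (G : DataGraph V E Dv) : PExp E Dv → Set (V × V)
  | .eps => G.idRel
  | .wild => {p | p.1 ∈ G.nodes ∧ p.2 ∈ G.nodes ∧ (G.edges p.1 p.2).Nonempty}
  | .lab a => {p | p.1 ∈ G.nodes ∧ p.2 ∈ G.nodes ∧ a ∈ G.edges p.1 p.2}
  | .inv a => {p | p.1 ∈ G.nodes ∧ p.2 ∈ G.nodes ∧ a ∈ G.edges p.2 p.1}
  | .test φ => {p | p.1 = p.2 ∧ p.1 ∈ nsem G φ}
  | .comp α β => dgComp (psem G α) (psem G β)
  | .union α β => psem G α ∪ psem G β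
  | .inter α β => psem G α ∩ psem G β
  | .star α => G.idRel ∪ {p | Relation.TransGen (fun x y => (x, y) ∈ psem G α) p.1 p.2}
  | .compl α => {p | p.1 ∈ G.nodes ∧ p.2 ∈ G.nodes ∧ p ∉ psem G α}
  | .iter α n m => {p | ∃ k, n ≤ k ∧ k ≤ m ∧ p ∈ dgPow G.idRel (psem G α) k}
/-- Semantics of node expressions on a data-graph: a set of nodes. -/
def nsem (G : DataGraph V E Dv) : NExp E Dv → Set V
  | .neg φ => {v | v ∈ G.nodes ∧ v ∉ nsem G φ}
  | .and φ ψ => nsem G φ ∩ nsem G ψ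
  | .or φ ψ => nsem G φ ∪ nsem G ψ
  | .diam α => {v | ∃ w, (v, w) ∈ psem G α}
  | .eqc c => {v | v ∈ G.nodes ∧ G.data v = c}
  | .neqc c => {v | v ∈ G.nodes ∧ G.data v ≠ c}
  | .cmpEq α β => {v | ∃ v' v'', (v, v') ∈ psem G α ∧ (v, v'') ∈ psem G β ∧ G.data v' = G.data v''}
  | .cmpNeq α β => {v | ∃ v' v'', (v, v') ∈ psem G α ∧ (v, v'') ∈ psem G β ∧ G.data v' ≠ G.data v''}
end

mutual
/-- Positive (complement/negation-free) path expressions. -/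
def PExp.Positive : PExp E Dv → Prop
  | .eps => True
  | .wild => True
  | .lab _ => True
  | .inv _ => True
  | .test φ => φ.Positive
  | .comp α β => α.Positive ∧ β.Positive
  | .union α β => α.Positive ∧ β.Positive
  | .inter α β => α.Positive ∧ β.Positive
  | .star α => α.Positive
  | .compl _ => False
  | .iter α _ _ => α.Positive
/-- Positive (negation-free) node expressions. -/
def NExp.Positive : NExp E Dv → Prop
  | .neg _ => False
  | .and φ ψ => φ.Positive ∧ ψ.Positive
  | .or φ ψ => φ.Positive ∧ ψ.Positive
  | .diam α => α.Positive
  | .eqc _ => True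
  | .neqc _ => True
  | .cmpEq α β => α.Positive ∧ β.Positive
  | .cmpNeq α β => α.Positive ∧ β.Positive
end

/-- `G.Subgraph G'` : `G` is a sub-data-graph of `G'`. -/
def DataGraph.Subgraph (G G' : DataGraph V E Dv) : Prop :=
  G.nodes ⊆ G'.nodes ∧ (∀ v ∈ G.nodes, ∀ w ∈ G.nodes, G.edges v w ⊆ G'.edges v w) ∧
    ∀ v ∈ G.nodes, G.data v = G'.data v

/-- Consistency of a data-graph w.r.t. sets of path and node constraints. -/
def DataGraph.Consistent (G : DataGraph V E Dv)
    (Rp : Set (PExp E Dv)) (Rn : Set (NExp E Dv)) : Prop :=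
  (∀ α ∈ Rp, ∀ v ∈ G.nodes, ∀ w ∈ G.nodes, (v, w) ∈ psem G α) ∧
    (∀ φ ∈ Rn, ∀ v ∈ G.nodes, v ∈ nsem G φ)

/-- `H` is a subset repair of `G` w.r.t. constraints `Rp ∪ Rn`. -/
def IsSubsetRepair (H G : DataGraph V E Dv)
    (Rp : Set (PExp E Dv)) (Rn : Set (NExp E Dv)) : Prop :=
  H.Consistent Rp Rn ∧ H.Subgraph G ∧
    ∀ K : DataGraph V E Dv, K.Consistent Rp Rn → K.Subgraph G → H.Subgraph K → K.Subgraph H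

/-- `H` is a superset repair of `G` w.r.t. constraints `Rp ∪ Rn`. -/
def IsSupersetRepair (H G : DataGraph V E Dv)
    (Rp : Set (PExp E Dv)) (Rn : Set (NExp E Dv)) : Prop :=
  H.Consistent Rp Rn ∧ G.Subgraph H ∧
    ∀ K : DataGraph V E Dv, K.Consistent Rp Rn → G.Subgraph K → K.Subgraph H → H.Subgraph K
/-- Data values for the superset-repair 3-SAT reduction: literals xᵢ, ¬xᵢ, and null. -/
inductive SDV where
  | x : ℕ → SDV
  | nx : ℕ → SDV
  | null

/-- The `down` edge label (the only edge label used). -/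
def dn : PExp Unit SDV := .lab ()

/-- The data value of a literal (variable index, polarity). -/
def litDV (i : ℕ) (b : Bool) : SDV := if b then .x i else .nx i

/-- αᵢ = ([xᵢ⁼] down* [¬xᵢ≠]) ∪ ([xᵢ≠] down* [¬xᵢ⁼]) ∪ ([xᵢ≠] down* [¬xᵢ≠]). -/
def alphaI (i : ℕ) : PExp Unit SDV :=
  .union (.union
      (.comp (.test (.eqc (.x i))) (.comp (.star dn) (.test (.neqc (.nx i)))))
      (.comp (.test (.neqc (.x i))) (.comp (.star dn) (.test (.eqc (.nx i))))))
    (.comp (.test (.neqc (.x i))) (.comp (.star dn) (.test (.neqc (.nx i)))))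

/-- down* [c⁼] down*. -/
def throughDV (c : SDV) : PExp Unit SDV :=
  .comp (.star dn) (.comp (.test (.eqc c)) (.star dn))

/-- βⱼ = (down* [(c₁ʲ)⁼] down*) ∪ (down* [(c₂ʲ)⁼] down*) ∪ (down* [(c₃ʲ)⁼] down*). -/
def betaJ {n m : ℕ} (C : Fin m → Fin 3 → Fin n × Bool) (j : Fin m) : PExp Unit SDV :=
  .union (.union (throughDV (litDV (C j 0).1 (C j 0).2))
      (throughDV (litDV (C j 1).1 (C j 1).2)))
    (throughDV (litDV (C j 2).1 (C j 2).2))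


/-! ### Auxiliary lemmas for stmt12 -/

open Relation

section SemLemmas

variable {V E Dv : Type}

lemma mem_test_iff {G : DataGraph V E Dv} {φ : NExp E Dv} {v w : V} :
    (v, w) ∈ psem G (.test φ) ↔ v = w ∧ v ∈ nsem G φ := by
  simp only [psem, Set.mem_setOf_eq]

lemma mem_star_iff {G : DataGraph V E Dv} {α : PExp E Dv} {v w : V} :
    (v, w) ∈ psem G (.star α) ↔ (v = w ∧ v ∈ G.nodes) ∨
      Relation.TransGen (fun x y => (x, y) ∈ psem G α) v w := by
  simp only [psem, DataGraph.idRel, Set.mem_union, Set.mem_setOf_eq]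

lemma mem_eqc_iff {G : DataGraph V E Dv} {c : Dv} {v : V} :
    v ∈ nsem G (.eqc c) ↔ v ∈ G.nodes ∧ G.data v = c := by
  simp only [nsem, Set.mem_setOf_eq]

lemma mem_neqc_iff {G : DataGraph V E Dv} {c : Dv} {v : V} :
    v ∈ nsem G (.neqc c) ↔ v ∈ G.nodes ∧ G.data v ≠ c := by
  simp only [nsem, Set.mem_setOf_eq]

lemma sandwich_iff {G : DataGraph V E Dv} {φ ψ : NExp E Dv} {α : PExp E Dv} {v w : V} :
    (v, w) ∈ psem G (.comp (.test φ) (.comp α (.test ψ))) ↔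
      v ∈ nsem G φ ∧ (v, w) ∈ psem G α ∧ w ∈ nsem G ψ := by
  simp only [psem, dgComp, Set.mem_setOf_eq]
  constructor
  · rintro ⟨y, ⟨rfl, h1⟩, z, hz, ⟨rfl, h2⟩⟩
    exact ⟨h1, hz, h2⟩
  · rintro ⟨h1, h2, h3⟩
    exact ⟨v, ⟨rfl, h1⟩, w, h2, ⟨rfl, h3⟩⟩
end SemLemmas

lemma psem_union {V E Dv : Type} (G : DataGraph V E Dv) (α β : PExp E Dv) :
    psem G (.union α β) = psem G α ∪ psem G β := by rw [psem]

lemma alphaI_iff {G : DataGraph ℕ Unit SDV} {i : ℕ} {v w : ℕ} :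
    (v, w) ∈ psem G (alphaI i) ↔
      ((v ∈ G.nodes ∧ G.data v = .x i) ∧ (v, w) ∈ psem G (.star dn) ∧
        (w ∈ G.nodes ∧ G.data w ≠ .nx i)) ∨
      ((v ∈ G.nodes ∧ G.data v ≠ .x i) ∧ (v, w) ∈ psem G (.star dn) ∧
        (w ∈ G.nodes ∧ G.data w = .nx i)) ∨
      ((v ∈ G.nodes ∧ G.data v ≠ .x i) ∧ (v, w) ∈ psem G (.star dn) ∧
        (w ∈ G.nodes ∧ G.data w ≠ .nx i)) := by
  rw [alphaI, psem_union, psem_union]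
  simp only [Set.mem_union, sandwich_iff, mem_eqc_iff, mem_neqc_iff]
  exact or_assoc

lemma throughDV_iff {G : DataGraph ℕ Unit SDV} {c : SDV} {v w : ℕ} :
    (v, w) ∈ psem G (throughDV c) ↔
      ∃ y, (v, y) ∈ psem G (.star dn) ∧ y ∈ G.nodes ∧ G.data y = c ∧
        (y, w) ∈ psem G (.star dn) := by
  rw [throughDV]
  simp only [psem, dgComp, Set.mem_setOf_eq]
  constructor
  · rintro ⟨y, h1, z, ⟨rfl, hy, hc⟩, h2⟩
    exact ⟨y, h1, hy, hc, h2⟩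
  · rintro ⟨y, h1, hy, hc, h2⟩
    exact ⟨y, h1, y, ⟨rfl, hy, hc⟩, h2⟩

lemma betaJ_iff {n m : ℕ} {C : Fin m → Fin 3 → Fin n × Bool} {j : Fin m}
    {G : DataGraph ℕ Unit SDV} {v w : ℕ} :
    (v, w) ∈ psem G (betaJ C j) ↔
      ∃ k : Fin 3, (v, w) ∈ psem G (throughDV (litDV (C j k).1 (C j k).2)) := by
  rw [betaJ, psem_union, psem_union]
  simp only [Set.mem_union]
  constructor
  · rintro ((h | h) | h)
    exacts [⟨0, h⟩, ⟨1, h⟩, ⟨2, h⟩]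
  · rintro ⟨k, h⟩
    fin_cases k
    exacts [Or.inl (Or.inl h), Or.inl (Or.inr h), Or.inr h]

lemma litDV_true (a : ℕ) : litDV a true = .x a := rfl

lemma litDV_false (a : ℕ) : litDV a false = .nx a := rfl

lemma litDV_inj {a b : ℕ} {p q : Bool} (h : litDV a p = litDV b q) : a = b ∧ p = q := by
  cases p <;> cases q <;> simp [litDV] at h <;> simp [h]

lemma litDV_eq_x {a : ℕ} {b : Bool} {i : ℕ} (h : litDV a b = .x i) : a = i ∧ b = true := by
  cases b <;> simp [litDV] at h <;> simp [h]

lemma litDV_eq_nx {a : ℕ} {b : Bool} {i : ℕ} (h : litDV a b = .nx i) : a = i ∧ b = false := by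
  cases b <;> simp [litDV] at h <;> simp [h]

lemma litDV_ne_null {a : ℕ} {b : Bool} : litDV a b ≠ .null := by
  cases b <;> simp [litDV]

/-- Cycle edge relation on `{0, …, s}`. -/
def cyc (s u v : ℕ) : Prop := (u < s ∧ v = u + 1) ∨ (0 < s ∧ u = s ∧ v = 0)

/-- The repair graph: nodes `{0,…,s}`, cycle edges, data given by `val`. -/
def HG (s : ℕ) (val : ℕ → SDV) : DataGraph ℕ Unit SDV :=
  ⟨{v | v ≤ s}, fun u v => {_e : Unit | cyc s u v}, val⟩

lemma HG_dn_iff {s : ℕ} {val : ℕ → SDV} {u v : ℕ} :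
    (u, v) ∈ psem (HG s val) dn ↔ cyc s u v := by
  rw [dn]
  simp only [psem, HG, Set.mem_setOf_eq]
  constructor
  · rintro ⟨-, -, h⟩; exact h
  · intro h
    refine ⟨?_, ?_, h⟩ <;> rcases h with ⟨h1, h2⟩ | ⟨h1, h2, h3⟩ <;> omega

lemma HG_transGen_up {s : ℕ} {val : ℕ → SDV} :
    ∀ d u : ℕ, 0 < d → u + d ≤ s →
      Relation.TransGen (fun x y => (x, y) ∈ psem (HG s val) dn) u (u + d) := by
  intro d
  induction d with
  | zero => omega
  | succ d ih =>
    intro u _ hle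
    rcases Nat.eq_zero_or_pos d with rfl | hd
    · exact TransGen.single (HG_dn_iff.2 (Or.inl ⟨by omega, rfl⟩))
    · exact (ih u hd (by omega)).tail (HG_dn_iff.2 (Or.inl ⟨by omega, by omega⟩))

lemma HG_transGen {s : ℕ} {val : ℕ → SDV} {u v : ℕ} (hu : u ≤ s) (hv : v ≤ s)
    (hne : u ≠ v) : Relation.TransGen (fun x y => (x, y) ∈ psem (HG s val) dn) u v := by
  have hzero : ∀ a : ℕ, 0 < a → a ≤ s →
      Relation.TransGen (fun x y => (x, y) ∈ psem (HG s val) dn) a 0 := by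
    intro a ha has
    have hstep : Relation.TransGen (fun x y => (x, y) ∈ psem (HG s val) dn) s 0 :=
      TransGen.single (HG_dn_iff.2 (Or.inr ⟨by omega, rfl, rfl⟩))
    rcases Nat.lt_or_ge a s with hlt | hge
    · exact (show Relation.TransGen _ a (a + (s - a)) from
        HG_transGen_up _ a (by omega) (by omega)).trans (by rwa [Nat.add_sub_cancel' (le_of_lt hlt)])
    · have : a = s := by omega
      subst this; exact hstep
  rcases Nat.lt_or_ge u v with hlt | hge
  · have := HG_transGen_up (s := s) (val := val) (v - u) u (by omega) (by omega)
    rwa [Nat.add_sub_cancel' (le_of_lt hlt)] at this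
  · have huv : v < u := by omega
    have h1 := hzero u (by omega) hu
    rcases Nat.eq_zero_or_pos v with rfl | hv0
    · exact h1
    · have h2 := HG_transGen_up (s := s) (val := val) v 0 hv0 (by omega)
      simpa using h1.trans (by simpa using h2)

lemma HG_star {s : ℕ} {val : ℕ → SDV} {u v : ℕ} (hu : u ≤ s) (hv : v ≤ s) :
    (u, v) ∈ psem (HG s val) (.star dn) := by
  rcases eq_or_ne u v with rfl | hne
  · exact mem_star_iff.2 (Or.inl ⟨rfl, hu⟩)
  · exact mem_star_iff.2 (Or.inr (HG_transGen hu hv hne))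

/-- a 3CNF formula is satisfiable iff the single-node data-graph with
value null has a superset repair w.r.t. R = {αᵢ} ∪ {βⱼ}. -/
theorem stmt12 (n m : ℕ) (C : Fin m → Fin 3 → Fin n × Bool) :
    (∃ f : Fin n → Bool, ∀ j : Fin m, ∃ k : Fin 3, f (C j k).1 = (C j k).2) ↔
      ∃ H : DataGraph ℕ Unit SDV,
        IsSupersetRepair H
          (⟨{0}, fun _ _ => ∅, fun _ => SDV.null⟩ : DataGraph ℕ Unit SDV)
          ({p | (∃ i : Fin n, p = alphaI (i : ℕ)) ∨ (∃ j : Fin m, p = betaJ C j)}) ∅ := by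
  classical
  constructor
  · rintro ⟨f, hf⟩
    choose wit hwit using hf
    set covers : Finset (Fin n) → Prop :=
      fun B => ∀ j : Fin m, ∃ k : Fin 3, (C j k).1 ∈ B ∧ f (C j k).1 = (C j k).2 with hcovdef
    set A0 : Finset (Fin n) := Finset.image (fun j => (C j (wit j)).1) Finset.univ with hA0
    have hA0cov : covers A0 :=
      fun j => ⟨wit j, Finset.mem_image.2 ⟨j, Finset.mem_univ _, rfl⟩, hwit j⟩
    obtain ⟨A, hAmem, hAmin⟩ : ∃ A ∈ A0.powerset.filter covers,
        ∀ B ∈ A0.powerset.filter covers, ¬ B < A := by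
      obtain ⟨A, hA⟩ := Finset.exists_minimal (s := A0.powerset.filter covers)
        ⟨A0, Finset.mem_filter.2 ⟨Finset.mem_powerset.2 le_rfl, hA0cov⟩⟩
      exact ⟨A, hA.1, fun B hB hlt => hlt.not_ge (hA.2 hB hlt.le)⟩
    rw [Finset.mem_filter, Finset.mem_powerset] at hAmem
    obtain ⟨hAsub, hAcov⟩ := hAmem
    have hAminimal : ∀ B : Finset (Fin n), B ⊆ A → covers B → B = A := by
      intro B hBsub hBcov
      by_contra hne
      exact hAmin B (Finset.mem_filter.2 ⟨Finset.mem_powerset.2 (hBsub.trans hAsub), hBcov⟩)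
        (lt_of_le_of_ne hBsub hne)
    set s := A.card with hs
    set ι : Fin s → Fin n := fun t => ((A.orderIsoOfFin rfl) t : Fin n) with hι
    have hιmem : ∀ t, ι t ∈ A := fun t => ((A.orderIsoOfFin rfl) t).2
    have hιinj : Function.Injective ι := fun a b h =>
      (A.orderIsoOfFin rfl).injective (Subtype.ext h)
    have hιsurj : ∀ i ∈ A, ∃ t, ι t = i := fun i hi =>
      ⟨(A.orderIsoOfFin rfl).symm ⟨i, hi⟩,
        congrArg Subtype.val ((A.orderIsoOfFin rfl).apply_symm_apply ⟨i, hi⟩)⟩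
    set val : ℕ → SDV := fun v =>
      if h : 0 < v ∧ v ≤ s then
        litDV (ι ⟨v - 1, by omega⟩) (f (ι ⟨v - 1, by omega⟩)) else SDV.null with hvaldef
    have hval0 : val 0 = SDV.null := by simp [hvaldef]
    have key : ∀ v : ℕ, 0 < v → v ≤ s →
        ∃ t : Fin s, (t : ℕ) + 1 = v ∧ val v = litDV (ι t) (f (ι t)) := by
      intro v h1 h2
      refine ⟨⟨v - 1, by omega⟩, ?_, ?_⟩
      · show v - 1 + 1 = v
        omega
      simp only [hvaldef]
      rw [dif_pos ⟨h1, h2⟩]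
    have hvalt : ∀ t : Fin s, val ((t : ℕ) + 1) = litDV (ι t) (f (ι t)) := by
      intro t
      obtain ⟨t', ht', he⟩ := key ((t : ℕ) + 1) (Nat.succ_pos _) (by omega)
      have : t' = t := Fin.ext (by omega)
      subst this; exact he
    have hval_char : ∀ v : ℕ, v ≤ s → ∀ i : Fin n, ∀ b : Bool,
        val v = litDV (i : ℕ) b → f i = b ∧ ∃ t : Fin s, ι t = i ∧ v = (t : ℕ) + 1 := by
      intro v hv i b hval
      rcases Nat.eq_zero_or_pos v with rfl | hpos
      · rw [hval0] at hval; exact absurd hval.symm litDV_ne_null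
      · obtain ⟨t, ht, hvt⟩ := key v hpos hv
        rw [hvt] at hval
        obtain ⟨hab, hpq⟩ := litDV_inj hval
        have hti : ι t = i := Fin.val_injective hab
        exact ⟨hti ▸ hpq, t, hti, ht.symm⟩
    have hHcons : (HG s val).Consistent
        {p | (∃ i : Fin n, p = alphaI (i : ℕ)) ∨ (∃ j : Fin m, p = betaJ C j)} ∅ := by
      constructor
      · rintro α (⟨i, rfl⟩ | ⟨j, rfl⟩) v hv w hw
        · have hv' : v ≤ s := hv
          have hw' : w ≤ s := hw
          have hstar := HG_star (val := val) hv' hw'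
          rw [alphaI_iff]
          by_cases hx : val v = SDV.x (i : ℕ)
          · left
            refine ⟨⟨hv, hx⟩, hstar, hw, ?_⟩
            intro hnx
            have h1 := (hval_char v hv' i true (by rwa [litDV_true])).1
            have h2 := (hval_char w hw' i false (by rwa [litDV_false])).1
            rw [h1] at h2; exact Bool.noConfusion h2
          · by_cases hnx : val w = SDV.nx (i : ℕ)
            · exact Or.inr (Or.inl ⟨⟨hv, hx⟩, hstar, hw, hnx⟩)
            · exact Or.inr (Or.inr ⟨⟨hv, hx⟩, hstar, hw, hnx⟩)
        · obtain ⟨k, hkA, hkf⟩ := hAcov j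
          obtain ⟨t, ht⟩ := hιsurj _ hkA
          rw [betaJ_iff]
          refine ⟨k, throughDV_iff.2 ⟨(t : ℕ) + 1, HG_star hv (by omega),
            (by omega : (t : ℕ) + 1 ≤ s), ?_, HG_star (by omega) hw⟩⟩
          show val ((t : ℕ) + 1) = _
          rw [hvalt t, ht, hkf]
      · exact fun φ hφ => absurd hφ (Set.notMem_empty φ)
    have hGH : DataGraph.Subgraph
        (⟨{0}, fun _ _ => ∅, fun _ => SDV.null⟩ : DataGraph ℕ Unit SDV) (HG s val) := by
      refine ⟨?_, fun v _ w _ => Set.empty_subset _, ?_⟩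
      · intro x hx
        have hx0 : x = 0 := hx
        subst hx0
        exact Nat.zero_le s
      · intro v hv
        have hv0 : v = 0 := hv
        subst hv0
        exact hval0.symm
    refine ⟨HG s val, hHcons, hGH, ?_⟩
    intro K hKcons hGK hKH
    obtain ⟨hKn, hKe, hKd⟩ := hKH
    have h0K : (0 : ℕ) ∈ K.nodes := hGK.1 rfl
    set B : Finset (Fin n) :=
      A.filter (fun i => ∃ t : Fin s, ι t = i ∧ ((t : ℕ) + 1) ∈ K.nodes) with hB
    have hBcov : covers B := by
      intro j
      have hβ := hKcons.1 (betaJ C j) (Or.inr ⟨j, rfl⟩) 0 h0K 0 h0K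
      obtain ⟨k, hk⟩ := betaJ_iff.1 hβ
      obtain ⟨y, -, hyK, hyd, -⟩ := throughDV_iff.1 hk
      have hys : y ≤ s := hKn hyK
      have hyd' : val y = litDV ((C j k).1 : ℕ) (C j k).2 := by
        rw [show val y = K.data y from (hKd y hyK).symm]; exact hyd
      obtain ⟨hf1, t, ht1, ht2⟩ := hval_char y hys (C j k).1 (C j k).2 hyd'
      exact ⟨k, Finset.mem_filter.2 ⟨ht1 ▸ hιmem t, t, ht1, ht2 ▸ hyK⟩, hf1⟩
    have hBA : B = A := hAminimal B (Finset.filter_subset _ _) hBcov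
    have hnodesK : ∀ v : ℕ, v ≤ s → v ∈ K.nodes := by
      intro v hv
      rcases Nat.eq_zero_or_pos v with rfl | hpos
      · exact h0K
      · have hmem : ι ⟨v - 1, by omega⟩ ∈ B := by rw [hBA]; exact hιmem _
        rw [hB, Finset.mem_filter] at hmem
        obtain ⟨-, t', ht'1, ht'2⟩ := hmem
        have ht't : t' = ⟨v - 1, by omega⟩ := hιinj ht'1
        rw [ht't] at ht'2
        have hco : ((⟨v - 1, by omega⟩ : Fin s) : ℕ) + 1 = v := by
          show v - 1 + 1 = v
          omega
        rwa [hco] at ht'2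
    have hedges : ∀ v ∈ (HG s val).nodes, ∀ w ∈ (HG s val).nodes,
        (HG s val).edges v w ⊆ K.edges v w := by
      intro v hv w hw e he
      have hcyc : cyc s v w := he
      have hvs : v ≤ s := hv
      have hws : w ≤ s := hw
      have hspos : 0 < s := by rcases hcyc with ⟨h1, h2⟩ | ⟨h1, h2⟩ <;> omega
      have hvw : v ≠ w := by rcases hcyc with ⟨h1, h2⟩ | ⟨h1, h2, h3⟩ <;> omega
      obtain ⟨i0, hi0⟩ : A.Nonempty := Finset.card_pos.1 hspos
      have hvK := hnodesK v hvs
      have hwK := hnodesK w hws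
      have hα := hKcons.1 (alphaI (i0 : ℕ)) (Or.inl ⟨i0, rfl⟩) v hvK w hwK
      have hstarK : (v, w) ∈ psem K (.star dn) := by
        rcases alphaI_iff.1 hα with ⟨-, h, -⟩ | ⟨-, h, -⟩ | ⟨-, h, -⟩ <;> exact h
      have htg : Relation.TransGen (fun x y => (x, y) ∈ psem K dn) v w := by
        rcases mem_star_iff.1 hstarK with ⟨rfl, -⟩ | h
        · exact absurd rfl hvw
        · exact h
      obtain ⟨y, hy1, -⟩ := Relation.TransGen.head'_iff.1 htg
      rw [dn] at hy1
      simp only [psem, Set.mem_setOf_eq] at hy1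
      obtain ⟨-, hyK, heK⟩ := hy1
      have hcyc2 : cyc s v y := hKe v hvK y hyK heK
      have hyw : y = w := by
        rcases hcyc with ⟨a1, a2⟩ | ⟨a1, a2, a3⟩ <;>
          rcases hcyc2 with ⟨b1, b2⟩ | ⟨b1, b2, b3⟩ <;> omega
      subst hyw
      cases e
      exact heK
    exact ⟨fun v hv => hnodesK v hv, hedges, fun v hv => (hKd v (hnodesK v hv)).symm⟩
  · rintro ⟨H, hcons, hGH, -⟩
    have h0 : (0 : ℕ) ∈ H.nodes := hGH.1 rfl
    have hxnx : ∀ i : Fin n, (∃ v ∈ H.nodes, H.data v = SDV.x (i : ℕ)) →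
        ∀ w ∈ H.nodes, H.data w ≠ SDV.nx (i : ℕ) := by
      rintro i ⟨v, hv, hvx⟩ w hw hwnx
      have hα := hcons.1 (alphaI (i : ℕ)) (Or.inl ⟨i, rfl⟩) v hv w hw
      rcases alphaI_iff.1 hα with ⟨⟨-, -⟩, -, -, h⟩ | ⟨⟨-, h⟩, -⟩ | ⟨⟨-, h⟩, -⟩
      · exact h hwnx
      · exact h hvx
      · exact h hvx
    refine ⟨fun i => decide (∃ v ∈ H.nodes, H.data v = SDV.x (i : ℕ)), ?_⟩
    intro j
    have hβ := hcons.1 (betaJ C j) (Or.inr ⟨j, rfl⟩) 0 h0 0 h0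
    obtain ⟨k, hk⟩ := betaJ_iff.1 hβ
    obtain ⟨y, -, hyH, hyd, -⟩ := throughDV_iff.1 hk
    refine ⟨k, ?_⟩
    cases hb : (C j k).2
    · rw [hb, litDV_false] at hyd
      simp only [decide_eq_false_iff_not]
      rintro ⟨v, hv, hvx⟩
      exact hxnx (C j k).1 ⟨v, hv, hvx⟩ y hyH hyd
    · rw [hb, litDV_true] at hyd
      simp only [decide_eq_true_eq]
      exact ⟨y, hyH, hyd⟩
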